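/- arXiv:1705.01888 — 2 statements merged into one kernel-verified Lean document; each statement's English description precedes it below -/
import Mathlib

section
/- Let M be a countable homogeneous relational structure whose automorphism group Aut(M) (with the pointwise convergence topology) contains a dense locally finite subgroup H. Then Age(M) has the extension property for partial automorphisms (EPPA): for every finite substructure A of M, there exists a finite substructure B of M containing A such that every partial automorphism of A extends to an automorphism of B. -/
open FirstOrder

/-- A partial bijection of `M` respects the relations of the structure on the
elements of its source (so it is a partial isomorphism). -/
def RespectsRel (L : FirstOrder.Language) {M : Type*} [L.Structure M]
    (p : PartialEquiv M M) : Prop :=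
  ∀ (n : ℕ) (R : L.Relations n) (t : Fin n → M), (∀ i, t i ∈ p.source) →
    (Language.Structure.RelMap R t ↔ Language.Structure.RelMap R (fun i => p (t i)))

/-- A permutation of `M` is an automorphism of the `L`-structure `M`. -/
def IsAut (L : FirstOrder.Language) {M : Type*} [L.Structure M] (g : Equiv.Perm M) : Prop :=
  ∀ (n : ℕ) (R : L.Relations n) (t : Fin n → M),
    Language.Structure.RelMap R t ↔ Language.Structure.RelMap R (fun i => g (t i))

/-- A partial automorphism of the finite substructure `A` of `M`. -/
def IsPartialAutoOn (L : FirstOrder.Language) {M : Type*} [L.Structure M]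
    (A : Set M) (p : PartialEquiv M M) : Prop :=
  p.source ⊆ A ∧ p.target ⊆ A ∧ RespectsRel L p

/-! Every partial automorphism of `A` extends to an automorphism (homogeneity), hence to an element
of `H` (density). Up to their restriction to `A` there are only finitely many partial automorphisms,
so finitely many elements of `H` suffice; they generate a finite subgroup `F ≤ H`. The union `B` of
the `F`-translates of `A` is finite and `F`-invariant, so each chosen element of `F` restricts to an
automorphism of `B`. -/

open Set

section

variable {α β γ : Type*}

theorem Set.Finite.exists_finite_subset_forall_exists {K : Set γ} (hK : K.Finite) {T : Set β}
    {P : γ → β → Prop} (h : ∀ k ∈ K, ∃ b ∈ T, P k b) :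
    ∃ s ⊆ T, s.Finite ∧ ∀ k ∈ K, ∃ b ∈ s, P k b := by
  choose b hbT hbP using h
  have : Finite K := hK
  refine ⟨range fun k : K => b k k.2, ?_, finite_range _, fun k hk => ?_⟩
  · rintro _ ⟨k, rfl⟩
    exact hbT k k.2
  · exact ⟨b k hk, ⟨⟨k, hk⟩, rfl⟩, hbP k hk⟩

namespace PartialEquiv

open scoped Classical in
noncomputable def graphOn (A : Set α) (p : PartialEquiv α α) : A → Option α :=
  fun a => if (a : α) ∈ p.source then some (p a) else none

theorem finite_graphOn_image {A : Set α} (hA : A.Finite) :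
    (graphOn A '' {p | p.target ⊆ A}).Finite := by
  have : Finite A := hA
  refine (Finite.pi' fun _ : A => (hA.image some).insert none).subset ?_
  rintro _ ⟨p, hp, rfl⟩ a
  by_cases ha : (a : α) ∈ p.source
  · simp [graphOn, ha, hp (p.map_source ha)]
  · simp [graphOn, ha]

theorem forall_mem_source_eq_iff_graphOn {A : Set α} {p : PartialEquiv α α} (hp : p.source ⊆ A)
    (g : α → α) :
    (∀ x ∈ p.source, g x = p x) ↔ ∀ (a : A) y, graphOn A p a = some y → g a = y := by
  constructor
  · intro h a y ha
    by_cases hs : (a : α) ∈ p.source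
    · simp only [graphOn, hs, if_true, Option.some.injEq] at ha
      exact ha ▸ h a hs
    · simp [graphOn, hs] at ha
  · intro h x hx
    exact h ⟨x, hp hx⟩ _ (by simp [graphOn, hx])

theorem exists_finite_subset_extending [FunLike β α α] {A : Set α} (hA : A.Finite)
    {S : Set (PartialEquiv α α)} (hS : ∀ p ∈ S, p.source ⊆ A ∧ p.target ⊆ A) {T : Set β}
    (hT : ∀ p ∈ S, ∃ g ∈ T, ∀ x ∈ p.source, g x = p x) :
    ∃ s ⊆ T, s.Finite ∧ ∀ p ∈ S, ∃ g ∈ s, ∀ x ∈ p.source, g x = p x := by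
  have hK : (graphOn A '' S).Finite :=
    (finite_graphOn_image hA).subset (image_mono fun p hp => (hS p hp).2)
  obtain ⟨s, hsT, hs, hcover⟩ := hK.exists_finite_subset_forall_exists
    (P := fun k (g : β) => ∀ (a : A) y, k a = some y → g a = y) <| by
      rintro _ ⟨p, hp, rfl⟩
      simpa only [← forall_mem_source_eq_iff_graphOn (hS p hp).1] using hT p hp
  refine ⟨s, hsT, hs, fun p hp => ?_⟩
  simpa only [forall_mem_source_eq_iff_graphOn (hS p hp).1] using hcover _ ⟨p, hp, rfl⟩

end PartialEquiv

namespace Subgroup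

variable (F : Subgroup (Equiv.Perm α)) (A : Set α)

def saturation : Set α := ⋃ f ∈ F, f '' A

theorem subset_saturation : A ⊆ F.saturation A :=
  fun a ha => mem_biUnion F.one_mem ⟨a, ha, rfl⟩

theorem finite_saturation (hF : (F : Set (Equiv.Perm α)).Finite) (hA : A.Finite) :
    (F.saturation A).Finite :=
  hF.biUnion fun f _ => hA.image f

theorem mapsTo_saturation {f : Equiv.Perm α} (hf : f ∈ F) :
    MapsTo f (F.saturation A) (F.saturation A) := by
  intro x hx
  obtain ⟨g, hg, a, ha, rfl⟩ := mem_iUnion₂.mp hx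
  exact mem_biUnion (F.mul_mem hf hg) ⟨a, ha, rfl⟩

theorem image_saturation {f : Equiv.Perm α} (hf : f ∈ F) :
    f '' F.saturation A = F.saturation A := by
  refine (F.mapsTo_saturation A hf).image_subset.antisymm fun x hx => ?_
  exact ⟨f⁻¹ x, F.mapsTo_saturation A (F.inv_mem hf) hx, f.apply_symm_apply x⟩

end Subgroup

end

theorem eppa_of_dense_locally_finite_subgroup_general
    (L : FirstOrder.Language) (M : Type*) [L.Structure M]
    (hhom : ∀ p : PartialEquiv M M, p.source.Finite → RespectsRel L p →
      ∃ g : Equiv.Perm M, IsAut L g ∧ ∀ x ∈ p.source, g x = p x)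
    (H : Subgroup (Equiv.Perm M))
    (hHaut : ∀ h ∈ H, IsAut L h)
    (hdense : ∀ g : Equiv.Perm M, IsAut L g → ∀ A : Set M, A.Finite →
      ∃ h ∈ H, ∀ a ∈ A, h a = g a)
    (hlf : ∀ s : Set (Equiv.Perm M), s ⊆ H → s.Finite →
      ((Subgroup.closure s : Subgroup (Equiv.Perm M)) : Set (Equiv.Perm M)).Finite) :
    ∀ A : Set M, A.Finite →
      ∃ B : Set M, B.Finite ∧ A ⊆ B ∧
        ∀ p : PartialEquiv M M, IsPartialAutoOn L A p →
          ∃ q : PartialEquiv M M, q.source = B ∧ q.target = B ∧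
            RespectsRel L q ∧ ∀ x ∈ p.source, q x = p x := by
  intro A hA
  have hextend : ∀ p ∈ {p | IsPartialAutoOn L A p}, ∃ h ∈ (H : Set (Equiv.Perm M)),
      ∀ x ∈ p.source, h x = p x := by
    rintro p ⟨hps, -, hpr⟩
    obtain ⟨g, hg, hgp⟩ := hhom p (hA.subset hps) hpr
    obtain ⟨h, hH, hhg⟩ := hdense g hg A hA
    exact ⟨h, hH, fun x hx => (hhg x (hps hx)).trans (hgp x hx)⟩
  obtain ⟨s, hsH, hs, hext⟩ :=
    PartialEquiv.exists_finite_subset_extending hA (fun p hp => ⟨hp.1, hp.2.1⟩) hextend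
  let F := Subgroup.closure s
  refine ⟨F.saturation A, F.finite_saturation A (hlf s hsH hs) hA, F.subset_saturation A,
    fun p hp => ?_⟩
  obtain ⟨h, hhs, hhp⟩ := hext p hp
  have hBh : h '' F.saturation A = F.saturation A :=
    F.image_saturation A (Subgroup.subset_closure hhs)
  exact ⟨h.toPartialEquivOfImageEq _ _ hBh, rfl, rfl, fun n R t _ => hHaut h (hsH hhs) n R t, hhp⟩

/-- If `M` is a countable homogeneous relational structure and `Aut(M)` contains a
dense locally finite subgroup `H`, then `Age(M)` has EPPA: every finite `A ⊆ M`
extends to a finite `B ⊆ M` such that every partial automorphism of `A` extends to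
an automorphism of `B`. -/
theorem eppa_of_dense_locally_finite_subgroup
    (L : FirstOrder.Language) (M : Type*) [L.Structure M] [Countable M]
    (hrel : ∀ n, IsEmpty (L.Functions n))
    (hhom : ∀ p : PartialEquiv M M, p.source.Finite → RespectsRel L p →
      ∃ g : Equiv.Perm M, IsAut L g ∧ ∀ x ∈ p.source, g x = p x)
    (H : Subgroup (Equiv.Perm M))
    (hHaut : ∀ h ∈ H, IsAut L h)
    (hdense : ∀ g : Equiv.Perm M, IsAut L g → ∀ A : Set M, A.Finite →
      ∃ h ∈ H, ∀ a ∈ A, h a = g a)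
    (hlf : ∀ s : Set (Equiv.Perm M), s ⊆ H → s.Finite →
      ((Subgroup.closure s : Subgroup (Equiv.Perm M)) : Set (Equiv.Perm M)).Finite) :
    ∀ A : Set M, A.Finite →
      ∃ B : Set M, B.Finite ∧ A ⊆ B ∧
        ∀ p : PartialEquiv M M, IsPartialAutoOn L A p →
          ∃ q : PartialEquiv M M, q.source = B ∧ q.target = B ∧
            RespectsRel L q ∧ ∀ x ∈ p.source, q x = p x :=
  eppa_of_dense_locally_finite_subgroup_general L M hhom H hHaut hdense hlf
end

section
/- Let M be a countable homogeneous relational structure over a finite relational language such that Age(M) has coherent EPPA. Then Aut(M) contains a dense locally finite subgroup: there is a subgroup H ≤ Aut(M) such that every finitely generated subgroup of H is finite, and for every g ∈ Aut(M) and finite A ⊆ M there is h ∈ H with h↾A = g↾A. -/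
open FirstOrder

/-!
Write `M` as an increasing union of finite sets `A₀ ⊆ B₀ ⊆ A₁ ⊆ B₁ ⊆ ⋯`, where `Bₙ` is the coherent
EPPA extension of `Aₙ`. Pushing a partial automorphism of `Aₙ` through the successive coherent
extensions gives a chain of finite automorphisms whose union is an automorphism of `M`, and
coherence makes this assignment multiplicative. Since an automorphism of `Bₙ` is a partial
automorphism of `Aₙ₊₁`, this embeds `Aut(Bₙ)` into `Aut(M)` as a finite subgroup `Hₙ`, with
`Hₙ ≤ Hₙ₊₁`. Then `H = ⋃ Hₙ` is locally finite, and it is dense because `g ↾ A` is a partial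
automorphism of some `Aₙ`, whose extension lies in `Hₙ`.
-/

open Set

section

variable {M : Type*}

theorem Set.Finite.exists_subset_of_monotone {S : ℕ → Set M} (hS : Monotone S) {s : Set M}
    (hs : s.Finite) (hsS : s ⊆ ⋃ n, S n) : ∃ n, s ⊆ S n := by
  simpa using hS.directed_le.exists_mem_subset_of_finset_subset_biUnion (s := hs.toFinset)
    (by simpa using hsS)

theorem Subgroup.finite_closure_of_subset_iSup {G : Type*} [Group G] {H : ℕ → Subgroup G}
    (hH : Monotone H) (hfin : ∀ n, (H n : Set G).Finite) {s : Set G} (hs : s.Finite)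
    (hsH : s ⊆ ((⨆ n, H n : Subgroup G) : Set G)) : (closure s : Set G).Finite := by
  rw [Subgroup.coe_iSup_of_directed hH.directed_le] at hsH
  obtain ⟨n, hn⟩ := hs.exists_subset_of_monotone (fun _ _ h => hH h) hsH
  exact (hfin n).subset ((closure_le (H n)).2 hn)

namespace PartialEquiv

structure IsExhaustingChain (T : ℕ → PartialEquiv M M) : Prop where
  target_eq : ∀ k, (T k).target = (T k).source
  source_subset_succ : ∀ k, (T k).source ⊆ (T (k + 1)).source
  eqOn_succ : ∀ k, EqOn (T (k + 1)) (T k) (T k).source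
  exists_mem_source : ∀ x, ∃ k, x ∈ (T k).source

namespace IsExhaustingChain

variable {T : ℕ → PartialEquiv M M} (hT : IsExhaustingChain T)
include hT

theorem source_mono : Monotone fun k => (T k).source :=
  monotone_nat_of_le_succ hT.source_subset_succ

theorem eqOn_of_le {k l : ℕ} (hkl : k ≤ l) : EqOn (T l) (T k) (T k).source := by
  induction l, hkl using Nat.le_induction with
  | base => exact eqOn_refl _ _
  | succ l hkl ih =>
    exact fun x hx => (hT.eqOn_succ l (hT.source_mono hkl hx)).trans (ih hx)

theorem exists_subset_source {s : Set M} (hs : s.Finite) : ∃ k, s ⊆ (T k).source :=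
  hs.exists_subset_of_monotone hT.source_mono fun x _ => mem_iUnion.2 (hT.exists_mem_source x)

open scoped Classical in
noncomputable def lim (x : M) : M :=
  T (Nat.find (hT.exists_mem_source x)) x

open scoped Classical in
theorem lim_eq {k : ℕ} {x : M} (hx : x ∈ (T k).source) : hT.lim x = T k x :=
  (hT.eqOn_of_le (Nat.find_min' _ hx) (Nat.find_spec (hT.exists_mem_source x))).symm

theorem bijective_lim : Function.Bijective hT.lim := by
  refine ⟨fun x y hxy => ?_, fun y => ?_⟩
  · obtain ⟨k, hk⟩ := hT.exists_subset_source (toFinite {x, y})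
    have hx : x ∈ (T k).source := hk (mem_insert x _)
    have hy : y ∈ (T k).source := hk (mem_insert_of_mem x rfl)
    rw [hT.lim_eq hx, hT.lim_eq hy] at hxy
    exact (T k).injOn hx hy hxy
  · obtain ⟨k, hk⟩ := hT.exists_mem_source y
    rw [← hT.target_eq] at hk
    exact ⟨(T k).symm y, by rw [hT.lim_eq ((T k).map_target hk), (T k).right_inv hk]⟩

noncomputable def toPerm : Equiv.Perm M :=
  Equiv.ofBijective hT.lim hT.bijective_lim

theorem toPerm_apply {k : ℕ} {x : M} (hx : x ∈ (T k).source) : hT.toPerm x = T k x :=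
  hT.lim_eq hx

end IsExhaustingChain

structure IsComposite (p₁ p₂ q : PartialEquiv M M) : Prop where
  source_eq : p₂.source = q.source
  target_eq : p₁.target = q.target
  target_eq_source : p₂.target = p₁.source
  apply_eq : ∀ x ∈ q.source, q x = p₁ (p₂ x)

theorem isComposite_trans {p₁ p₂ : PartialEquiv M M} (h : p₂.target = p₁.source) :
    IsComposite p₁ p₂ (p₂.trans p₁) where
  source_eq := by
    rw [trans_source, ← h]
    exact (inter_eq_left.2 fun _ hx => p₂.map_source hx).symm
  target_eq := by rw [trans_target'', h, inter_self, image_source_eq_target]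
  target_eq_source := h
  apply_eq _ _ := rfl

end PartialEquiv

open PartialEquiv

section PartialAutomorphisms

variable {L : Language} [L.Structure M]

theorem RespectsRel.symm {p : PartialEquiv M M} (hp : RespectsRel L p) : RespectsRel L p.symm := by
  intro n R t ht
  have key := hp n R (fun i => p.symm (t i)) fun i => p.map_target (ht i)
  simp only [fun i => p.right_inv (ht i)] at key
  exact key.symm

theorem RespectsRel.trans {p₁ p₂ : PartialEquiv M M} (h₂ : RespectsRel L p₂)
    (h₁ : RespectsRel L p₁) : RespectsRel L (p₂.trans p₁) := by
  intro n R t ht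
  rw [trans_source] at ht
  exact (h₂ n R t fun i => (ht i).1).trans (h₁ n R _ fun i => (ht i).2)

theorem IsPartialAutoOn.symm {A : Set M} {p : PartialEquiv M M} (hp : IsPartialAutoOn L A p) :
    IsPartialAutoOn L A p.symm :=
  ⟨hp.2.1, hp.1, hp.2.2.symm⟩

theorem IsPartialAutoOn.trans {A : Set M} {p₁ p₂ : PartialEquiv M M}
    (h₂ : IsPartialAutoOn L A p₂) (h₁ : IsPartialAutoOn L A p₁) :
    IsPartialAutoOn L A (p₂.trans p₁) :=
  ⟨fun _ hx => h₂.1 (trans_source p₂ p₁ ▸ hx).1, fun _ hx => h₁.2.1 (trans_target p₂ p₁ ▸ hx).1,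
    h₂.2.2.trans h₁.2.2⟩

theorem isPartialAutoOn_ofSet {A U : Set M} (hU : U ⊆ A) :
    IsPartialAutoOn L A (ofSet U) :=
  ⟨hU, hU, fun _ _ _ _ => Iff.rfl⟩

end PartialAutomorphisms

structure IsCoherentExtension (L : Language) [L.Structure M] (A B : Set M)
    (φ : PartialEquiv M M → PartialEquiv M M) : Prop where
  subset : A ⊆ B
  source_eq : ∀ ⦃p⦄, IsPartialAutoOn L A p → (φ p).source = B
  target_eq : ∀ ⦃p⦄, IsPartialAutoOn L A p → (φ p).target = B
  respectsRel : ∀ ⦃p⦄, IsPartialAutoOn L A p → RespectsRel L (φ p)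
  apply_eq : ∀ ⦃p⦄, IsPartialAutoOn L A p → ∀ x ∈ p.source, φ p x = p x
  apply_comp : ∀ ⦃p₁ p₂ q⦄, IsPartialAutoOn L A p₁ → IsPartialAutoOn L A p₂ →
    IsPartialAutoOn L A q → IsComposite p₁ p₂ q → ∀ x ∈ B, φ q x = φ p₁ (φ p₂ x)

namespace IsCoherentExtension

variable {L : Language} [L.Structure M] {A B : Set M} {φ : PartialEquiv M M → PartialEquiv M M}
  (hφ : IsCoherentExtension L A B φ)
include hφ

theorem isPartialAutoOn {A' : Set M} (hBA' : B ⊆ A') {p : PartialEquiv M M}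
    (hp : IsPartialAutoOn L A p) : IsPartialAutoOn L A' (φ p) :=
  ⟨(hφ.source_eq hp).trans_subset hBA', (hφ.target_eq hp).trans_subset hBA', hφ.respectsRel hp⟩

theorem isComposite {p₁ p₂ q : PartialEquiv M M} (h₁ : IsPartialAutoOn L A p₁)
    (h₂ : IsPartialAutoOn L A p₂) (hq : IsPartialAutoOn L A q) (hc : IsComposite p₁ p₂ q) :
    IsComposite (φ p₁) (φ p₂) (φ q) where
  source_eq := by rw [hφ.source_eq h₂, hφ.source_eq hq]
  target_eq := by rw [hφ.target_eq h₁, hφ.target_eq hq]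
  target_eq_source := by rw [hφ.target_eq h₂, hφ.source_eq h₁]
  apply_eq x hx := hφ.apply_comp h₁ h₂ hq hc x (hφ.source_eq hq ▸ hx)

end IsCoherentExtension

theorem exists_finite_exhaustion [Countable M] (P : Set M → Set M → Prop)
    (h : ∀ A : Set M, A.Finite → ∃ B : Set M, B.Finite ∧ P A B) :
    ∃ A B : ℕ → Set M, (∀ n, P (A n) (B n)) ∧ (∀ n, (B n).Finite) ∧ (∀ n, B n ⊆ A (n + 1)) ∧
      ∀ x, ∃ n, x ∈ A n := by
  obtain ⟨f, hf⟩ := Countable.exists_injective_nat M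
  choose B hBfin hP using h
  let C : ℕ → {A : Set M // A.Finite} := fun n => Nat.rec ⟨∅, finite_empty⟩
    (fun k A => ⟨B A A.2 ∪ f ⁻¹' Iic k,
      (hBfin _ _).union ((finite_Iic k).preimage hf.injOn)⟩) n
  refine ⟨fun n => (C n).1, fun n => B (C n).1 (C n).2, fun n => hP _ _, fun n => hBfin _ _,
    fun n => subset_union_left, fun x => ⟨f x + 1, ?_⟩⟩
  exact Or.inr (le_refl (f x))

/-- `B n ⊆ A (n + 1)` makes every automorphism of `B n` a partial automorphism of `A (n + 1)`,
so that the extension maps of consecutive levels can be composed. -/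
structure CoherentExhaustion (L : Language) (M : Type*) [L.Structure M] where
  A : ℕ → Set M
  B : ℕ → Set M
  φ : ℕ → PartialEquiv M M → PartialEquiv M M
  isCoherentExtension : ∀ n, IsCoherentExtension L (A n) (B n) (φ n)
  finite_B : ∀ n, (B n).Finite
  B_subset_A_succ : ∀ n, B n ⊆ A (n + 1)
  exists_mem_A : ∀ x, ∃ n, x ∈ A n

theorem nonempty_coherentExhaustion (L : Language) [L.Structure M] [Countable M]
    (h : ∀ A : Set M, A.Finite → ∃ B : Set M, B.Finite ∧ ∃ φ, IsCoherentExtension L A B φ) :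
    Nonempty (CoherentExhaustion L M) := by
  obtain ⟨A, B, hφ, hB, hBA, hA⟩ := exists_finite_exhaustion _ h
  choose φ hφ using hφ
  exact ⟨⟨A, B, φ, hφ, hB, hBA, hA⟩⟩

namespace CoherentExhaustion

variable {L : Language} [L.Structure M] (S : CoherentExhaustion L M)

theorem A_subset_B (n : ℕ) : S.A n ⊆ S.B n :=
  (S.isCoherentExtension n).subset

theorem B_mono : Monotone S.B :=
  monotone_nat_of_le_succ fun n => (S.B_subset_A_succ n).trans (S.A_subset_B (n + 1))

theorem A_mono : Monotone S.A :=
  monotone_nat_of_le_succ fun n => (S.A_subset_B n).trans (S.B_subset_A_succ n)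

theorem exists_subset_A {s : Set M} (hs : s.Finite) : ∃ n, s ⊆ S.A n :=
  hs.exists_subset_of_monotone S.A_mono fun x _ => mem_iUnion.2 (S.exists_mem_A x)

theorem isPartialAutoOn_φ {n : ℕ} {p : PartialEquiv M M} (hp : IsPartialAutoOn L (S.A n) p) :
    IsPartialAutoOn L (S.A (n + 1)) (S.φ n p) :=
  (S.isCoherentExtension n).isPartialAutoOn (S.B_subset_A_succ n) hp

def tower (n : ℕ) (p : PartialEquiv M M) : ℕ → PartialEquiv M M
  | 0 => p
  | k + 1 => S.φ (n + k) (tower n p k)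

variable {S} {n : ℕ} {p : PartialEquiv M M}

theorem isPartialAutoOn_tower (hp : IsPartialAutoOn L (S.A n) p) (k : ℕ) :
    IsPartialAutoOn L (S.A (n + k)) (S.tower n p k) := by
  induction k with
  | zero => exact hp
  | succ k ih => exact S.isPartialAutoOn_φ ih

theorem tower_succ_source (hp : IsPartialAutoOn L (S.A n) p) (k : ℕ) :
    (S.tower n p (k + 1)).source = S.B (n + k) :=
  (S.isCoherentExtension _).source_eq (isPartialAutoOn_tower hp k)

theorem tower_succ_target (hp : IsPartialAutoOn L (S.A n) p) (k : ℕ) :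
    (S.tower n p (k + 1)).target = S.B (n + k) :=
  (S.isCoherentExtension _).target_eq (isPartialAutoOn_tower hp k)

theorem isComposite_tower {p₁ p₂ q : PartialEquiv M M} (h₁ : IsPartialAutoOn L (S.A n) p₁)
    (h₂ : IsPartialAutoOn L (S.A n) p₂) (hq : IsPartialAutoOn L (S.A n) q)
    (hc : IsComposite p₁ p₂ q) (k : ℕ) :
    IsComposite (S.tower n p₁ k) (S.tower n p₂ k) (S.tower n q k) := by
  induction k with
  | zero => exact hc
  | succ k ih =>
    exact (S.isCoherentExtension _).isComposite (isPartialAutoOn_tower h₁ k)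
      (isPartialAutoOn_tower h₂ k) (isPartialAutoOn_tower hq k) ih

theorem tower_φ (k : ℕ) : S.tower (n + 1) (S.φ n p) k = S.tower n p (k + 1) := by
  induction k with
  | zero => rfl
  | succ k ih =>
    change S.φ (n + 1 + k) _ = S.φ (n + (k + 1)) _
    rw [ih, Nat.add_right_comm, Nat.add_assoc]

theorem isExhaustingChain_tower (hp : IsPartialAutoOn L (S.A n) p) :
    IsExhaustingChain fun k => S.tower n p (k + 1) where
  target_eq k := by rw [tower_succ_source hp, tower_succ_target hp]
  source_subset_succ k := by
    rw [tower_succ_source hp, tower_succ_source hp]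
    exact S.B_mono (Nat.le_succ _)
  eqOn_succ k := (S.isCoherentExtension _).apply_eq (isPartialAutoOn_tower hp (k + 1))
  exists_mem_source x := by
    obtain ⟨k, hk⟩ := S.exists_mem_A x
    exact ⟨k, tower_succ_source hp k ▸ S.A_subset_B _ (S.A_mono (Nat.le_add_left k n) hk)⟩

noncomputable def extendPerm (hp : IsPartialAutoOn L (S.A n) p) : Equiv.Perm M :=
  (isExhaustingChain_tower hp).toPerm

theorem extendPerm_apply_of_mem_tower (hp : IsPartialAutoOn L (S.A n) p) {k : ℕ} {x : M}
    (hx : x ∈ (S.tower n p (k + 1)).source) : extendPerm hp x = S.tower n p (k + 1) x :=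
  (isExhaustingChain_tower hp).toPerm_apply hx

theorem extendPerm_apply (hp : IsPartialAutoOn L (S.A n) p) {x : M} (hx : x ∈ p.source) :
    extendPerm hp x = p x := by
  have hx' : x ∈ (S.tower n p 1).source := by
    rw [tower_succ_source hp]
    exact S.A_subset_B n (hp.1 hx)
  exact (extendPerm_apply_of_mem_tower hp hx').trans ((S.isCoherentExtension n).apply_eq hp x hx)

theorem isAut_extendPerm (hp : IsPartialAutoOn L (S.A n) p) : IsAut L (extendPerm hp) := by
  intro m R t
  obtain ⟨k, hk⟩ := (isExhaustingChain_tower hp).exists_subset_source (finite_range t)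
  have ht : ∀ i, t i ∈ (S.tower n p (k + 1)).source := fun i => hk (mem_range_self i)
  have heq : (fun i => extendPerm hp (t i)) = fun i => S.tower n p (k + 1) (t i) :=
    funext fun i => extendPerm_apply_of_mem_tower hp (ht i)
  rw [heq]
  exact (S.isCoherentExtension _).respectsRel (isPartialAutoOn_tower hp k) m R t ht

theorem extendPerm_of_isComposite {p₁ p₂ q : PartialEquiv M M}
    (h₁ : IsPartialAutoOn L (S.A n) p₁) (h₂ : IsPartialAutoOn L (S.A n) p₂)
    (hq : IsPartialAutoOn L (S.A n) q) (hc : IsComposite p₁ p₂ q) :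
    extendPerm hq = extendPerm h₁ * extendPerm h₂ := by
  ext x
  obtain ⟨k, hk⟩ := (isExhaustingChain_tower h₂).exists_mem_source x
  have hc' := isComposite_tower h₁ h₂ hq hc (k + 1)
  have hx : x ∈ (S.tower n q (k + 1)).source := hc'.source_eq ▸ hk
  have hy : S.tower n p₂ (k + 1) x ∈ (S.tower n p₁ (k + 1)).source :=
    hc'.target_eq_source ▸ (S.tower n p₂ (k + 1)).map_source hk
  rw [Equiv.Perm.mul_apply, extendPerm_apply_of_mem_tower hq hx,
    extendPerm_apply_of_mem_tower h₂ hk, extendPerm_apply_of_mem_tower h₁ hy, hc'.apply_eq x hx]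

-- Coherence makes the extension of an identity idempotent.
theorem extendPerm_ofSet {U : Set M} (hU : IsPartialAutoOn L (S.A n) (ofSet U)) :
    extendPerm hU = 1 :=
  mul_eq_left.1 (extendPerm_of_isComposite hU hU hU ⟨rfl, rfl, rfl, fun _ _ => rfl⟩).symm

theorem extendPerm_symm (hp : IsPartialAutoOn L (S.A n) p) :
    extendPerm hp.symm = (extendPerm hp)⁻¹ := by
  have hid := isPartialAutoOn_ofSet (L := L) hp.1
  refine eq_inv_of_mul_eq_one_left ?_
  rw [← extendPerm_of_isComposite hp.symm hp hid ⟨rfl, rfl, rfl, fun x hx => (p.left_inv hx).symm⟩,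
    extendPerm_ofSet]

theorem extendPerm_congr {p' : PartialEquiv M M} (hp : IsPartialAutoOn L (S.A n) p)
    (hp' : IsPartialAutoOn L (S.A n) p') (hs : p.source = p'.source) (ht : p.target = p'.target)
    (h : EqOn p p' p.source) : extendPerm hp = extendPerm hp' := by
  have hid := isPartialAutoOn_ofSet (L := L) hp.1
  rw [extendPerm_of_isComposite hp' hid hp ⟨rfl, ht.symm, hs, h⟩, extendPerm_ofSet, mul_one]

theorem extendPerm_φ (hp : IsPartialAutoOn L (S.A n) p) :
    extendPerm (S.isPartialAutoOn_φ hp) = extendPerm hp := by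
  ext x
  obtain ⟨k, hk⟩ := (isExhaustingChain_tower (S.isPartialAutoOn_φ hp)).exists_mem_source x
  have hk' : x ∈ (S.tower n p (k + 1 + 1)).source := tower_φ (S := S) (k + 1) ▸ hk
  rw [extendPerm_apply_of_mem_tower _ hk, extendPerm_apply_of_mem_tower hp hk', tower_φ]

variable (S)

/-- The image of `Aut(B n)` in `Aut(M)`. -/
noncomputable def levelSubgroup (n : ℕ) : Subgroup (Equiv.Perm M) where
  carrier := {g | ∃ p, ∃ hp : IsPartialAutoOn L (S.A (n + 1)) p,
    p.source = S.B n ∧ p.target = S.B n ∧ extendPerm hp = g}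
  one_mem' := ⟨_, isPartialAutoOn_ofSet (S.B_subset_A_succ n), rfl, rfl, extendPerm_ofSet _⟩
  mul_mem' := by
    rintro _ _ ⟨p₁, h₁, hs₁, ht₁, rfl⟩ ⟨p₂, h₂, hs₂, ht₂, rfl⟩
    have hc := isComposite_trans (ht₂.trans hs₁.symm)
    exact ⟨p₂.trans p₁, h₂.trans h₁, hc.source_eq ▸ hs₂, hc.target_eq ▸ ht₁,
      extendPerm_of_isComposite h₁ h₂ (h₂.trans h₁) hc⟩
  inv_mem' := by
    rintro _ ⟨p, hp, hs, ht, rfl⟩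
    exact ⟨p.symm, hp.symm, ht, hs, extendPerm_symm hp⟩

theorem isAut_of_mem_levelSubgroup {n : ℕ} {g : Equiv.Perm M} (hg : g ∈ S.levelSubgroup n) :
    IsAut L g := by
  obtain ⟨p, hp, -, -, rfl⟩ := hg
  exact isAut_extendPerm hp

theorem levelSubgroup_mono : Monotone S.levelSubgroup := by
  refine monotone_nat_of_le_succ fun n => ?_
  rintro _ ⟨p, hp, hs, ht, rfl⟩
  have hφ := S.isCoherentExtension (n + 1)
  exact ⟨_, S.isPartialAutoOn_φ hp, hφ.source_eq hp, hφ.target_eq hp, extendPerm_φ hp⟩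

theorem finite_levelSubgroup (n : ℕ) : (S.levelSubgroup n : Set (Equiv.Perm M)).Finite := by
  have := (S.finite_B n).to_subtype
  have hfin : (univ.pi fun _ : S.B n => S.B n).Finite := Set.Finite.pi fun _ => S.finite_B n
  refine Set.Finite.of_injOn (f := fun g : Equiv.Perm M => ((S.B n).domRestrict g : S.B n → M))
    ?_ ?_ hfin
  · rintro _ ⟨p, hp, hs, ht, rfl⟩ ⟨x, hx⟩ -
    rw [← hs] at hx
    simpa only [domRestrict_apply, extendPerm_apply hp hx, ← ht] using p.map_source hx
  · rintro _ ⟨p, hp, hs, ht, rfl⟩ _ ⟨p', hp', hs', ht', rfl⟩ h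
    refine extendPerm_congr hp hp' (hs.trans hs'.symm) (ht.trans ht'.symm) fun x hx => ?_
    have hx' : x ∈ p'.source := hs' ▸ hs ▸ hx
    rw [← extendPerm_apply hp hx, ← extendPerm_apply hp' hx']
    exact congrFun h ⟨x, hs ▸ hx⟩

theorem exists_mem_levelSubgroup_eqOn {g : Equiv.Perm M} (hg : IsAut L g) {A : Set M}
    (hA : A.Finite) : ∃ n, ∃ h ∈ S.levelSubgroup n, EqOn h g A := by
  obtain ⟨n, hn⟩ := S.exists_subset_A (hA.union (hA.image g))
  let p := g.toPartialEquivOfImageEq A (g '' A) rfl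
  have hp : IsPartialAutoOn L (S.A n) p :=
    ⟨subset_union_left.trans hn, subset_union_right.trans hn, fun m R t _ => hg m R t⟩
  have hφ := S.isCoherentExtension n
  exact ⟨n, extendPerm hp,
    ⟨_, S.isPartialAutoOn_φ hp, hφ.source_eq hp, hφ.target_eq hp, extendPerm_φ hp⟩,
    fun x hx => extendPerm_apply hp hx⟩

end CoherentExhaustion

end

theorem dense_locally_finite_subgroup_of_coherent_eppa_general
    (L : FirstOrder.Language) (M : Type*) [L.Structure M] [Countable M]
    (hEPPA : ∀ A : Set M, A.Finite →
      ∃ B : Set M, B.Finite ∧ A ⊆ B ∧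
        ∃ φ : PartialEquiv M M → PartialEquiv M M,
          (∀ p, IsPartialAutoOn L A p →
            (φ p).source = B ∧ (φ p).target = B ∧ RespectsRel L (φ p) ∧
              ∀ x ∈ p.source, φ p x = p x) ∧
          (∀ p₁ p₂ q, IsPartialAutoOn L A p₁ → IsPartialAutoOn L A p₂ →
            IsPartialAutoOn L A q →
            p₂.source = q.source → p₁.target = q.target → p₂.target = p₁.source →
            (∀ x ∈ q.source, q x = p₁ (p₂ x)) →
            ∀ x ∈ B, φ q x = φ p₁ (φ p₂ x))) :
    ∃ H : Subgroup (Equiv.Perm M),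
      (∀ h ∈ H, IsAut L h) ∧
      (∀ s : Set (Equiv.Perm M), s ⊆ H → s.Finite →
        ((Subgroup.closure s : Subgroup (Equiv.Perm M)) : Set (Equiv.Perm M)).Finite) ∧
      (∀ g : Equiv.Perm M, IsAut L g → ∀ A : Set M, A.Finite →
        ∃ h ∈ H, ∀ a ∈ A, h a = g a) := by
  obtain ⟨S⟩ := nonempty_coherentExhaustion L fun A hA => by
    obtain ⟨B, hB, hAB, φ, hφ, hcoh⟩ := hEPPA A hA
    exact ⟨B, hB, φ, hAB, fun p hp => (hφ p hp).1, fun p hp => (hφ p hp).2.1,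
      fun p hp => (hφ p hp).2.2.1, fun p hp => (hφ p hp).2.2.2,
      fun p₁ p₂ q h₁ h₂ hq hc =>
        hcoh p₁ p₂ q h₁ h₂ hq hc.source_eq hc.target_eq hc.target_eq_source hc.apply_eq⟩
  have hmem {h : Equiv.Perm M} : h ∈ ⨆ n, S.levelSubgroup n ↔ ∃ n, h ∈ S.levelSubgroup n :=
    Subgroup.mem_iSup_of_directed S.levelSubgroup_mono.directed_le
  refine ⟨⨆ n, S.levelSubgroup n, fun h hh => ?_, fun s hs hsfin => ?_, fun g hg A hA => ?_⟩
  · obtain ⟨n, hn⟩ := hmem.1 hh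
    exact S.isAut_of_mem_levelSubgroup hn
  · exact Subgroup.finite_closure_of_subset_iSup S.levelSubgroup_mono S.finite_levelSubgroup
      hsfin hs
  · obtain ⟨n, h, hn, hgh⟩ := S.exists_mem_levelSubgroup_eqOn hg hA
    exact ⟨h, hmem.2 ⟨n, hn⟩, hgh⟩

/-- If `M` is a countable homogeneous structure over a finite relational language
and `Age(M)` has coherent EPPA (here phrased inside `M`, as homogeneity allows),
then `Aut(M)` contains a dense locally finite subgroup. -/
theorem dense_locally_finite_subgroup_of_coherent_eppa
    (L : FirstOrder.Language) (M : Type*) [L.Structure M] [Countable M]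
    (hrel : ∀ n, IsEmpty (L.Functions n))
    (hfinrel : ∀ n, Finite (L.Relations n))
    (hbd : ∃ N : ℕ, ∀ n, N ≤ n → IsEmpty (L.Relations n))
    (hhom : ∀ p : PartialEquiv M M, p.source.Finite → RespectsRel L p →
      ∃ g : Equiv.Perm M, IsAut L g ∧ ∀ x ∈ p.source, g x = p x)
    (hEPPA : ∀ A : Set M, A.Finite →
      ∃ B : Set M, B.Finite ∧ A ⊆ B ∧
        ∃ φ : PartialEquiv M M → PartialEquiv M M,
          (∀ p, IsPartialAutoOn L A p →
            (φ p).source = B ∧ (φ p).target = B ∧ RespectsRel L (φ p) ∧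
              ∀ x ∈ p.source, φ p x = p x) ∧
          (∀ p₁ p₂ q, IsPartialAutoOn L A p₁ → IsPartialAutoOn L A p₂ →
            IsPartialAutoOn L A q →
            p₂.source = q.source → p₁.target = q.target → p₂.target = p₁.source →
            (∀ x ∈ q.source, q x = p₁ (p₂ x)) →
            ∀ x ∈ B, φ q x = φ p₁ (φ p₂ x))) :
    ∃ H : Subgroup (Equiv.Perm M),
      (∀ h ∈ H, IsAut L h) ∧
      (∀ s : Set (Equiv.Perm M), s ⊆ H → s.Finite →
        ((Subgroup.closure s : Subgroup (Equiv.Perm M)) : Set (Equiv.Perm M)).Finite) ∧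
      (∀ g : Equiv.Perm M, IsAut L g → ∀ A : Set M, A.Finite →
        ∃ h ∈ H, ∀ a ∈ A, h a = g a) :=
  dense_locally_finite_subgroup_of_coherent_eppa_general L M hEPPA
end
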